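/- Let n ≥ 1 and let t be a full binary tree with n+1 leaves. The Loday vector M_n(t) is the vector of a permutation of {1,…,n} if and only if every internal vertex of t has at least one child that is a leaf. -/
import Mathlib

/-- Full binary trees: every internal vertex has exactly two children. -/
inductive BTree : Type
  | leaf : BTree
  | node : BTree → BTree → BTree

/-- Number of leaves of a full binary tree. -/
def BTree.leaves : BTree → ℕ
  | .leaf => 1
  | .node l r => l.leaves + r.leaves

/-- The list of weights `a_i * b_i` of the internal vertices of `t`, in left-to-right
(infix) order: the `i`-th entry corresponds to the internal vertex between leaves `i-1` and `i`. -/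
def BTree.loday : BTree → List ℕ
  | .leaf => []
  | .node l r => l.loday ++ (l.leaves * r.leaves) :: r.loday

/-- Loday's vector `M_n(t) ∈ ℝ^n` of a full binary tree `t` with `n+1` leaves. -/
def lodayVec (t : BTree) (n : ℕ) : Fin n → ℝ :=
  fun i => ((t.loday.getD i 0 : ℕ) : ℝ)

/-- The vector `(σ(1), …, σ(n)) ∈ ℝ^n` of a permutation of `{1, …, n}`
(a permutation of `Fin n` with values shifted by one so that they lie in `{1, …, n}`). -/
def permVec {n : ℕ} (σ : Equiv.Perm (Fin n)) : Fin n → ℝ :=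
  fun i => ((σ i : ℕ) + 1 : ℝ)

/-- Every internal vertex of the tree has at least one child that is a leaf. -/
def BTree.allInternalHaveLeafChild : BTree → Prop
  | .leaf => True
  | .node l r =>
      (l = BTree.leaf ∨ r = BTree.leaf) ∧
        l.allInternalHaveLeafChild ∧ r.allInternalHaveLeafChild

lemma BTree.one_le_leaves (t : BTree) : 1 ≤ t.leaves := by
  induction t with
  | leaf => simp [BTree.leaves]
  | node l r hl hr => simp [BTree.leaves]; omega

lemma BTree.eq_leaf_of_leaves_eq_one {t : BTree} (h : t.leaves = 1) : t = BTree.leaf := by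
  cases t with
  | leaf => rfl
  | node l r =>
    simp [BTree.leaves] at h
    have := l.one_le_leaves; have := r.one_le_leaves; omega

lemma BTree.loday_length (t : BTree) : t.loday.length + 1 = t.leaves := by
  induction t with
  | leaf => simp [BTree.loday, BTree.leaves]
  | node l r hl hr =>
    simp [BTree.loday, BTree.leaves] at *
    omega

lemma range'_split (m : ℕ) (hm : 1 ≤ m) :
    List.range' 1 m = List.range' 1 (m - 1) ++ [m] := by
  conv_lhs => rw [show m = (m - 1) + 1 by omega]
  rw [List.range'_1_concat]
  congr 2
  omega

/-- Key combinatorial lemma. -/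
lemma loday_perm_range (t : BTree) :
    t.loday.Perm (List.range' 1 (t.leaves - 1)) ↔ t.allInternalHaveLeafChild := by
  induction t with
  | leaf => simp [BTree.loday, BTree.leaves, BTree.allInternalHaveLeafChild]
  | node l r hl hr =>
    have hal := l.one_le_leaves
    have har := r.one_le_leaves
    constructor
    · intro h
      have hmem : l.leaves * r.leaves ∈ List.range' 1 (BTree.leaves (l.node r) - 1) :=
        h.mem_iff.mp (by simp [BTree.loday])
      rw [List.mem_range'_1] at hmem
      have hle : l.leaves * r.leaves ≤ l.leaves + r.leaves - 1 := by
        simp [BTree.leaves] at hmem; omega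
      have hone : l.leaves = 1 ∨ r.leaves = 1 := by
        by_contra hc
        push_neg at hc
        have := Nat.add_le_mul (show 2 ≤ l.leaves by omega) (show 2 ≤ r.leaves by omega)
        omega
      rcases hone with h1 | h1
      · -- l is a leaf
        have hleaf : l = BTree.leaf := BTree.eq_leaf_of_leaves_eq_one h1
        subst hleaf
        simp only [BTree.loday, BTree.leaves, h1, List.nil_append, one_mul,
          Nat.add_sub_cancel_left] at h ⊢
        rw [range'_split r.leaves har] at h
        have h' : List.Perm (r.loday ++ [r.leaves]) (List.range' 1 (r.leaves - 1) ++ [r.leaves]) :=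
          List.perm_append_comm.trans h
        exact ⟨Or.inl rfl, trivial, hr.mp ((List.perm_append_right_iff _).1 h')⟩
      · -- r is a leaf
        have hleaf : r = BTree.leaf := BTree.eq_leaf_of_leaves_eq_one h1
        subst hleaf
        simp only [BTree.loday, BTree.leaves, h1, mul_one, List.append_nil,
          Nat.add_sub_cancel] at h ⊢
        rw [range'_split l.leaves hal] at h
        have h' : List.Perm (l.loday ++ [l.leaves]) (List.range' 1 (l.leaves - 1) ++ [l.leaves]) := by
          simpa using h
        exact ⟨Or.inr rfl, hl.mp ((List.perm_append_right_iff _).1 h'), trivial⟩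
    · rintro ⟨hor, hcl, hcr⟩
      rcases hor with h1 | h1
      · subst h1
        simp only [BTree.loday, BTree.leaves, List.nil_append, one_mul,
          Nat.add_sub_cancel_left]
        rw [range'_split r.leaves har]
        exact List.perm_append_comm.symm.trans ((hr.mpr hcr).append_right [r.leaves])
      · subst h1
        simp only [BTree.loday, BTree.leaves, mul_one, Nat.add_sub_cancel]
        rw [range'_split l.leaves hal]
        simpa using (hl.mpr hcl).append_right [l.leaves]

/-- For `n ≥ 1` and a full binary tree `t` with `n+1` leaves, the Loday
vector `M_n(t)` is the vector of a permutation of `{1, …, n}` iff every internal vertex of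
`t` has at least one child that is a leaf. -/
theorem loday_perm_iff_leaf_children (n : ℕ) (hn : 1 ≤ n) (t : BTree)
    (ht : t.leaves = n + 1) :
    (∃ σ : Equiv.Perm (Fin n), lodayVec t n = permVec σ) ↔
      t.allInternalHaveLeafChild := by
  have hlen : t.loday.length = n := by have := t.loday_length; omega
  have hrange : t.leaves - 1 = n := by omega
  rw [← loday_perm_range, hrange]
  constructor
  · rintro ⟨σ, hσ⟩
    have hget : ∀ i : Fin n, t.loday.getD (i : ℕ) 0 = (σ i : ℕ) + 1 := by
      intro i
      have := congrFun hσ i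
      simp only [lodayVec, permVec] at this
      have h2 : ((t.loday.getD (i : ℕ) 0 : ℕ) : ℝ) = (((σ i : ℕ) + 1 : ℕ) : ℝ) := by
        push_cast; exact this
      exact Nat.cast_injective (R := ℝ) h2
    apply List.Perm.symm
    rw [List.perm_ext_iff_of_nodup (List.nodup_range' ..) ?_]
    · intro x
      rw [List.mem_range'_1, List.mem_iff_getElem]
      constructor
      · rintro ⟨h1x, hxn⟩
        obtain ⟨i, hi⟩ := σ.surjective ⟨x - 1, by omega⟩
        refine ⟨i, by omega, ?_⟩
        have := hget i
        rw [List.getD_eq_getElem _ _ (by omega)] at this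
        rw [this, hi]
        simp; omega
      · rintro ⟨i, hilt, rfl⟩
        have hpi : i < n := by omega
        have := hget ⟨i, hpi⟩
        rw [List.getD_eq_getElem _ _ (by omega)] at this
        rw [this]
        have := (σ ⟨i, hpi⟩).isLt
        omega
    · rw [List.nodup_iff_injective_get]
      intro i j hij
      have hpi : (i : ℕ) < n := by omega
      have hpj : (j : ℕ) < n := by omega
      have hi : t.loday.getD (i : ℕ) 0 = (σ ⟨i, hpi⟩ : ℕ) + 1 := hget ⟨i, hpi⟩
      have hj : t.loday.getD (j : ℕ) 0 = (σ ⟨j, hpj⟩ : ℕ) + 1 := hget ⟨j, hpj⟩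
      have h1' : (i : ℕ) < t.loday.length := by omega
      have h2' : (j : ℕ) < t.loday.length := by omega
      have e1 : t.loday.getD (i : ℕ) 0 = t.loday.get ⟨i, h1'⟩ := by
        rw [List.getD_eq_getElem _ _ h1']; rfl
      have e2 : t.loday.getD (j : ℕ) 0 = t.loday.get ⟨j, h2'⟩ := by
        rw [List.getD_eq_getElem _ _ h2']; rfl
      have hgd : t.loday.getD (i : ℕ) 0 = t.loday.getD (j : ℕ) 0 := by
        rw [e1, e2]
        exact hij
      have hval : (σ ⟨i, hpi⟩ : ℕ) = (σ ⟨j, hpj⟩ : ℕ) := by omega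
      have := σ.injective (Fin.ext hval)
      exact Fin.ext (by simpa using congrArg Fin.val this)
  · intro h
    have hpos : ∀ i : ℕ, (hi : i < n) → 1 ≤ t.loday.getD i 0 ∧ t.loday.getD i 0 ≤ n := by
      intro i hi
      rw [List.getD_eq_getElem _ _ (by omega)]
      have : t.loday[i]'(by omega) ∈ List.range' 1 n :=
        h.mem_iff.mp (List.getElem_mem _)
      rw [List.mem_range'_1] at this
      omega
    have hnodup : t.loday.Nodup := h.nodup_iff.mpr (List.nodup_range' ..)
    rw [List.nodup_iff_injective_get] at hnodup
    set g : Fin n → Fin n := fun i =>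
      ⟨t.loday.getD (i : ℕ) 0 - 1, by have := hpos i i.isLt; omega⟩ with hg
    have hginj : Function.Injective g := by
      intro i j hij
      have h1 := hpos i i.isLt
      have h2 := hpos j j.isLt
      simp only [hg, Fin.mk.injEq] at hij
      have hgd : t.loday.getD (i : ℕ) 0 = t.loday.getD (j : ℕ) 0 := by omega
      have h1' : (i : ℕ) < t.loday.length := by omega
      have h2' : (j : ℕ) < t.loday.length := by omega
      have e1 : t.loday.getD (i : ℕ) 0 = t.loday.get ⟨i, h1'⟩ := by
        rw [List.getD_eq_getElem _ _ h1']; rfl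
      have e2 : t.loday.getD (j : ℕ) 0 = t.loday.get ⟨j, h2'⟩ := by
        rw [List.getD_eq_getElem _ _ h2']; rfl
      have := hnodup (show t.loday.get ⟨i, h1'⟩ = t.loday.get ⟨j, h2'⟩ by
        rw [← e1, ← e2]; exact hgd)
      exact Fin.ext (by simpa using congrArg Fin.val this)
    refine ⟨Equiv.ofBijective g (Finite.injective_iff_bijective.mp hginj), ?_⟩
    funext i
    simp only [lodayVec, permVec, Equiv.ofBijective_apply, hg]
    have := hpos i i.isLt
    have hcast : ((t.loday.getD (i : ℕ) 0 - 1 : ℕ) : ℝ)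
        = ((t.loday.getD (i : ℕ) 0 : ℕ) : ℝ) - 1 := by
      push_cast [this.1]; ring
    rw [hcast]; ring
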